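/- arXiv:1602.01198 — 6 statements merged into one kernel-verified Lean document; each statement's English description precedes it below -/
import Mathlib

section
/- Let A be a finite set in R^d and suppose each point a ∈ A is associated a probability density p_a on R^d with mean μ_a and covariance Σ_a. If a center x is drawn by first picking a0 uniformly from A and then sampling x ~ p_{a0}, then the expected potential E[∑_{a∈A} ||a - x||²] equals φ_opt(A) + φ_opt^N(A), where φ_opt(A) = ∑_{a∈A}||a - c(A)||² and φ_opt^N(A) = ∑_{a∈A} E_{x~p_a}||x - c(A)||². -/
/-!
Parallel-axis theorem: if `c` is the barycenter of `A`, the cross terms `⟪a - c, x - c⟫` sum to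
zero over `A`, so `∑ a ∈ A, ‖a - x‖ ^ 2 = ∑ a ∈ A, ‖a - c‖ ^ 2 + |A| ‖x - c‖ ^ 2` for every `x`.
Integrating against the probability measure `p a0` and averaging over `a0` gives the claim.
-/

open MeasureTheory Finset

section ParallelAxis

variable {ι E : Type*}

theorem Finset.sum_sub_barycenter_eq_zero [AddCommGroup E] [Module ℝ E] (s : Finset ι)
    (v : ι → E) : ∑ i ∈ s, (v i - (#s : ℝ)⁻¹ • ∑ j ∈ s, v j) = 0 := by
  rcases s.eq_empty_or_nonempty with rfl | hs
  · simp
  have hcard : (#s : ℝ) ≠ 0 := by exact_mod_cast hs.card_ne_zero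
  rw [sum_sub_distrib, sum_const, ← Nat.cast_smul_eq_nsmul ℝ, smul_smul,
    mul_inv_cancel₀ hcard, one_smul, sub_self]

theorem Finset.sum_norm_sub_sq_eq_of_sum_sub_eq_zero [NormedAddCommGroup E]
    [InnerProductSpace ℝ E] {s : Finset ι} {v : ι → E} {c : E} (hc : ∑ i ∈ s, (v i - c) = 0)
    (x : E) :
    ∑ i ∈ s, ‖v i - x‖ ^ 2 = ∑ i ∈ s, ‖v i - c‖ ^ 2 + #s * ‖x - c‖ ^ 2 := by
  have hexpand : ∀ i, ‖v i - x‖ ^ 2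
      = ‖v i - c‖ ^ 2 - 2 * inner ℝ (v i - c) (x - c) + ‖x - c‖ ^ 2 := fun i => by
    rw [← norm_sub_sq_real, sub_sub_sub_cancel_right]
  simp_rw [hexpand]
  rw [sum_add_distrib, sum_sub_distrib, ← mul_sum, ← sum_inner, hc, inner_zero_left,
    sum_const, nsmul_eq_mul]
  ring

end ParallelAxis

theorem stmt_2_general {d : ℕ} (A : Finset (EuclideanSpace ℝ (Fin d)))
    (p : EuclideanSpace ℝ (Fin d) → Measure (EuclideanSpace ℝ (Fin d)))
    (hp : ∀ a ∈ A, IsProbabilityMeasure (p a))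
    (c : EuclideanSpace ℝ (Fin d)) (hc : c = (A.card : ℝ)⁻¹ • ∑ a ∈ A, a)
    (hint : ∀ a ∈ A, Integrable (fun x => ‖x - c‖ ^ 2) (p a)) :
    (A.card : ℝ)⁻¹ * ∑ a0 ∈ A, ∫ x, (∑ a ∈ A, ‖a - x‖ ^ 2) ∂(p a0)
      = (∑ a ∈ A, ‖a - c‖ ^ 2) + ∑ a ∈ A, ∫ x, ‖x - c‖ ^ 2 ∂(p a) := by
  rcases A.eq_empty_or_nonempty with rfl | hA
  · simp
  have hcard : (#A : ℝ) ≠ 0 := by exact_mod_cast hA.card_ne_zero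
  have hcenter : ∑ a ∈ A, (a - c) = 0 := hc ▸ sum_sub_barycenter_eq_zero A id
  have hintegral : ∀ a0 ∈ A, ∫ x, (∑ a ∈ A, ‖a - x‖ ^ 2) ∂(p a0)
      = ∑ a ∈ A, ‖a - c‖ ^ 2 + #A * ∫ x, ‖x - c‖ ^ 2 ∂(p a0) := fun a0 ha0 => by
    have := hp a0 ha0
    rw [funext (sum_norm_sub_sq_eq_of_sum_sub_eq_zero (v := fun a => a) hcenter),
      integral_add (integrable_const _) ((hint a0 ha0).const_mul _), integral_const,
      integral_const_mul, probReal_univ, one_smul]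
  rw [sum_congr rfl hintegral, sum_add_distrib, sum_const, nsmul_eq_mul, ← mul_sum, mul_add,
    inv_mul_cancel_left₀ hcard, inv_mul_cancel_left₀ hcard]

theorem stmt_2 {d : ℕ} (A : Finset (EuclideanSpace ℝ (Fin d))) (hA : A.Nonempty)
    (p : EuclideanSpace ℝ (Fin d) → Measure (EuclideanSpace ℝ (Fin d)))
    (hp : ∀ a ∈ A, IsProbabilityMeasure (p a))
    (c : EuclideanSpace ℝ (Fin d)) (hc : c = (A.card : ℝ)⁻¹ • ∑ a ∈ A, a)
    (hint : ∀ a ∈ A, Integrable (fun x => ‖x - c‖ ^ 2) (p a)) :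
    (A.card : ℝ)⁻¹ * ∑ a0 ∈ A, ∫ x, (∑ a ∈ A, ‖a - x‖ ^ 2) ∂(p a0)
      = (∑ a ∈ A, ‖a - c‖ ^ 2) + ∑ a ∈ A, ∫ x, ‖x - c‖ ^ 2 ∂(p a) :=
  stmt_2_general A p hp c hc hint
end

section
/- Let N be a finite nonempty set of points in R^d, and for x ∈ R^d let nn_N(x) denote a nearest point of N to x. For any points a_i, a_j ∉ N, if nn_{N∪{a_j}}(a_i) = a_j and nn_{N∪{a_i}}(a_j) = a_i (i.e., adding the other point changes both nearest neighbors), then ||a_i - nn_N(a_i)|| ≤ 4 ||a_j - nn_N(a_j)||. -/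
/-- `y` is a nearest neighbor of `x` in the finite set `N`. -/
def IsNN {d : ℕ} (N : Finset (EuclideanSpace ℝ (Fin d)))
    (x y : EuclideanSpace ℝ (Fin d)) : Prop :=
  y ∈ N ∧ ∀ z ∈ N, dist x y ≤ dist x z

theorem stmt_5 {d : ℕ} [DecidableEq (EuclideanSpace ℝ (Fin d))]
    (N : Finset (EuclideanSpace ℝ (Fin d))) (hN : N.Nonempty)
    (ai aj : EuclideanSpace ℝ (Fin d)) (hai : ai ∉ N) (haj : aj ∉ N)
    (bi bj : EuclideanSpace ℝ (Fin d))
    (hbi : IsNN N ai bi) (hbj : IsNN N aj bj)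
    (hij : IsNN (insert aj N) ai aj) (hji : IsNN (insert ai N) aj ai) :
    dist ai bi ≤ 4 * dist aj bj := by
  have h1 : dist ai bi ≤ dist ai bj := hbi.2 bj hbj.1
  have h2 : dist aj ai ≤ dist aj bj :=
    hji.2 bj (Finset.mem_insert_of_mem hbj.1)
  have h3 : dist ai bj ≤ dist ai aj + dist aj bj := dist_triangle _ _ _
  have h4 : dist ai aj = dist aj ai := dist_comm _ _
  have h5 : (0:ℝ) ≤ dist aj bj := dist_nonneg
  linarith
end

section
/- There exists a constant η with 0 ≤ η ≤ 3 such that for any finite set A ⊂ R^d, any a_i, a_j ∈ A, and any nonempty N ⊆ A \ {a_i, a_j}: ||a_i - nn_N(a_i)|| / ||a_i - nn_{N∪{a_j}}(a_i)|| ≤ (1+η) · ||a_j - nn_N(a_j)|| / ||a_j - nn_{N∪{a_i}}(a_j)||, provided the denominators are nonzero. -/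
theorem stmt_7 :
    ∃ η : ℝ, 0 ≤ η ∧ η ≤ 3 ∧
      ∀ (d : ℕ), ∀ [DecidableEq (EuclideanSpace ℝ (Fin d))],
      ∀ (A N : Finset (EuclideanSpace ℝ (Fin d)))
        (ai aj : EuclideanSpace ℝ (Fin d)),
        ai ∈ A → aj ∈ A → N.Nonempty → N ⊆ A \ {ai, aj} →
        ∀ bi bi' bj bj' : EuclideanSpace ℝ (Fin d),
          IsNN N ai bi → IsNN (insert aj N) ai bi' →
          IsNN N aj bj → IsNN (insert ai N) aj bj' →
          dist ai bi' ≠ 0 → dist aj bj' ≠ 0 →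
          dist ai bi / dist ai bi' ≤ (1 + η) * (dist aj bj / dist aj bj') := by
  refine ⟨3, by norm_num, le_refl 3, ?_⟩
  intro d _ A N ai aj hai haj hN hsub bi bi' bj bj' hbi hbi' hbj hbj' hni hnj
  obtain ⟨hbiN, hbimin⟩ := hbi
  obtain ⟨hbi'N, hbi'min⟩ := hbi'
  obtain ⟨hbjN, hbjmin⟩ := hbj
  obtain ⟨hbj'N, hbj'min⟩ := hbj'
  set D : ℝ := dist ai aj with hD
  set ri : ℝ := dist ai bi with hri
  set ri' : ℝ := dist ai bi' with hri'
  set rj : ℝ := dist aj bj with hrj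
  set rj' : ℝ := dist aj bj' with hrj'
  have hi'D : ri' ≤ D := hbi'min aj (Finset.mem_insert_self _ _)
  have hi'i : ri' ≤ ri := hbi'min bi (Finset.mem_insert_of_mem hbiN)
  have hj'D : rj' ≤ D := by
    have := hbj'min ai (Finset.mem_insert_self _ _)
    rwa [dist_comm aj ai] at this
  have hj'j : rj' ≤ rj := hbj'min bj (Finset.mem_insert_of_mem hbjN)
  have hi'pos : 0 < ri' := lt_of_le_of_ne dist_nonneg (Ne.symm hni)
  have hj'pos : 0 < rj' := lt_of_le_of_ne dist_nonneg (Ne.symm hnj)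
  have hDpos : 0 < D := lt_of_lt_of_le hi'pos hi'D
  have hipos : 0 < ri := lt_of_lt_of_le hi'pos hi'i
  have hjpos : 0 < rj := lt_of_lt_of_le hj'pos hj'j
  have hlbi : min D ri ≤ ri' := by
    rcases Finset.mem_insert.mp hbi'N with h | h
    · rw [hri', h]; exact min_le_left _ _
    · exact le_trans (min_le_right _ _) (hbimin bi' h)
  have hlbj : min D rj ≤ rj' := by
    rcases Finset.mem_insert.mp hbj'N with h | h
    · rw [hrj', h, dist_comm aj ai]; exact min_le_left _ _
    · exact le_trans (min_le_right _ _) (hbjmin bj' h)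
  have htri : ri ≤ D + rj :=
    le_trans (hbimin bj hbjN) (dist_triangle ai aj bj)
  have key : ri * rj' ≤ 4 * rj * ri' := by
    rcases le_total ri D with h | h
    · -- ri' = ri
      have : ri ≤ ri' := le_trans (le_of_eq (min_eq_right h).symm) hlbi
      nlinarith
    · -- ri' = D
      have hi'eq : D ≤ ri' := le_trans (le_of_eq (min_eq_left h).symm) hlbi
      rcases le_total rj D with h2 | h2
      · have : rj ≤ rj' := le_trans (le_of_eq (min_eq_right h2).symm) hlbj
        nlinarith
      · have : D ≤ rj' := le_trans (le_of_eq (min_eq_left h2).symm) hlbj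
        nlinarith
  have : (1 : ℝ) + 3 = 4 := by norm_num
  rw [this, ← mul_div_assoc, div_le_div_iff₀ hi'pos hj'pos]
  linarith [key]
end

section
/- Let A ⊂ R^d be a finite set, N ⊆ A nonempty, and x, x' ∈ R^d. Define A' := {a ∈ A : nn_{N∪{x'}}(a) = x'} (points whose nearest element of N∪{x'} is x') and let c := (1/|A'|)∑_{a∈A'} a, assuming A' nonempty. Then ∑_{a∈A} ||a - nn_{N∪{c}}(a)||² ≤ ∑_{a∈A} ||a - nn_{N∪{x'}}(a)||². -/
/-!
Points whose nearest center was some other element of `N` still have that center available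
after `x'` is replaced by `c`, so their cost does not grow. The points `A'` captured by `x'`
pay at most their squared distance to `c`, and the mean `c` of `A'` minimizes the sum of
squared distances to `A'` by the parallel axis identity
`∑ ‖a - y‖² = ∑ ‖a - c‖² + |A'| ‖c - y‖²`.
-/

open Finset

section Mean

variable {E : Type*} [NormedAddCommGroup E] [InnerProductSpace ℝ E]

theorem Finset.sum_norm_sub_sq_eq_sum_norm_sub_mean_sq_add (s : Finset E) (y : E) :
    ∑ a ∈ s, ‖a - y‖ ^ 2 =
      ∑ a ∈ s, ‖a - (#s : ℝ)⁻¹ • ∑ b ∈ s, b‖ ^ 2 + #s * ‖(#s : ℝ)⁻¹ • ∑ b ∈ s, b - y‖ ^ 2 := by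
  rcases s.eq_empty_or_nonempty with rfl | hs
  · simp
  set c : E := (#s : ℝ)⁻¹ • ∑ b ∈ s, b
  have hcard : (#s : ℝ) ≠ 0 := by exact_mod_cast hs.card_ne_zero
  have hdev : ∑ a ∈ s, (a - c) = 0 := by
    rw [sum_sub_distrib, sum_const, ← Nat.cast_smul_eq_nsmul ℝ, smul_smul,
      mul_inv_cancel₀ hcard, one_smul, sub_self]
  calc ∑ a ∈ s, ‖a - y‖ ^ 2
      = ∑ a ∈ s, (‖a - c‖ ^ 2 + 2 * inner ℝ (a - c) (c - y) + ‖c - y‖ ^ 2) := by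
        refine sum_congr rfl fun a _ => ?_
        rw [← norm_add_sq_real, sub_add_sub_cancel]
    _ = ∑ a ∈ s, ‖a - c‖ ^ 2 + 2 * inner ℝ (∑ a ∈ s, (a - c)) (c - y) + #s * ‖c - y‖ ^ 2 := by
        rw [sum_add_distrib, sum_add_distrib, sum_const, sum_inner, mul_sum, nsmul_eq_mul]
    _ = ∑ a ∈ s, ‖a - c‖ ^ 2 + #s * ‖c - y‖ ^ 2 := by
        rw [hdev, inner_zero_left, mul_zero, add_zero]

theorem Finset.sum_norm_sub_mean_sq_le (s : Finset E) (y : E) :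
    ∑ a ∈ s, ‖a - (#s : ℝ)⁻¹ • ∑ b ∈ s, b‖ ^ 2 ≤ ∑ a ∈ s, ‖a - y‖ ^ 2 := by
  rw [s.sum_norm_sub_sq_eq_sum_norm_sub_mean_sq_add y]
  exact le_add_of_nonneg_right (by positivity)

end Mean

theorem IsNN.dist_le_of_ne_insert {d : ℕ} [DecidableEq (EuclideanSpace ℝ (Fin d))]
    {N : Finset (EuclideanSpace ℝ (Fin d))} {a x c y₁ y₂ : EuclideanSpace ℝ (Fin d)}
    (h₁ : IsNN (insert x N) a y₁) (h₂ : IsNN (insert c N) a y₂) (hne : y₁ ≠ x) :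
    dist a y₂ ≤ dist a y₁ := by
  have hy₁ : y₁ ∈ N := (mem_insert.mp h₁.1).resolve_left hne
  exact h₂.2 y₁ (mem_insert_of_mem hy₁)

theorem stmt_11_general {d : ℕ} [DecidableEq (EuclideanSpace ℝ (Fin d))]
    (A N : Finset (EuclideanSpace ℝ (Fin d)))
    (x' : EuclideanSpace ℝ (Fin d))
    (nn1 nn2 : EuclideanSpace ℝ (Fin d) → EuclideanSpace ℝ (Fin d))
    (hnn1 : ∀ a, IsNN (insert x' N) a (nn1 a))
    (A' : Finset (EuclideanSpace ℝ (Fin d))) (hA' : A' = A.filter (fun a => nn1 a = x'))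
    (c : EuclideanSpace ℝ (Fin d)) (hc : c = (A'.card : ℝ)⁻¹ • ∑ a ∈ A', a)
    (hnn2 : ∀ a, IsNN (insert c N) a (nn2 a)) :
    ∑ a ∈ A, dist a (nn2 a) ^ 2 ≤ ∑ a ∈ A, dist a (nn1 a) ^ 2 := by
  rw [← sum_filter_add_sum_filter_not A (fun a => nn1 a = x'),
    ← sum_filter_add_sum_filter_not A (fun a => nn1 a = x'), ← hA']
  refine add_le_add ?_ (sum_le_sum fun a ha => ?_)
  · calc ∑ a ∈ A', dist a (nn2 a) ^ 2
        ≤ ∑ a ∈ A', dist a c ^ 2 := by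
          gcongr with a
          exact (hnn2 a).2 c (mem_insert_self c N)
      _ ≤ ∑ a ∈ A', dist a x' ^ 2 := by
          simpa only [dist_eq_norm, hc] using A'.sum_norm_sub_mean_sq_le x'
      _ = ∑ a ∈ A', dist a (nn1 a) ^ 2 := by
          refine sum_congr rfl fun a ha => ?_
          rw [hA', mem_filter] at ha
          rw [ha.2]
  · gcongr
    exact (hnn1 a).dist_le_of_ne_insert (hnn2 a) (mem_filter.mp ha).2

theorem stmt_11 {d : ℕ} [DecidableEq (EuclideanSpace ℝ (Fin d))]
    (A N : Finset (EuclideanSpace ℝ (Fin d))) (hNA : N ⊆ A) (hN : N.Nonempty)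
    (x x' : EuclideanSpace ℝ (Fin d))
    (nn1 nn2 : EuclideanSpace ℝ (Fin d) → EuclideanSpace ℝ (Fin d))
    (hnn1 : ∀ a, IsNN (insert x' N) a (nn1 a))
    (A' : Finset (EuclideanSpace ℝ (Fin d))) (hA' : A' = A.filter (fun a => nn1 a = x'))
    (hA'ne : A'.Nonempty)
    (c : EuclideanSpace ℝ (Fin d)) (hc : c = (A'.card : ℝ)⁻¹ • ∑ a ∈ A', a)
    (hnn2 : ∀ a, IsNN (insert c N) a (nn2 a)) :
    ∑ a ∈ A, dist a (nn2 a) ^ 2 ≤ ∑ a ∈ A, dist a (nn1 a) ^ 2 :=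
  stmt_11_general A N x' nn1 nn2 hnn1 A' hA' c hc hnn2
end

section
/- Suppose a finite set A ⊂ R^d with |A| = n, a set N ⊂ A with |N| = i-1 avoiding a designated element a_n, is such that for every subset B ⊂ A of size n-1, ∑_{a∈B} ||a - nn_N(a)||² ≥ R²/δ_w (δ_w-spread), and all points of A lie in a ball of diameter at most R. Then for the neighboring set A' obtained by replacing a_n by any a'_n in the same ball, ∑_{a∈A} ||a - nn_N(a)||² ≤ (1+δ_w) ∑_{a∈A'} ||a - nn_N(a)||². -/
theorem stmt_13 {d : ℕ} [DecidableEq (EuclideanSpace ℝ (Fin d))]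
    (A : Finset (EuclideanSpace ℝ (Fin d)))
    (an an' : EuclideanSpace ℝ (Fin d)) (han : an ∈ A)
    (A' : Finset (EuclideanSpace ℝ (Fin d))) (hA' : A' = insert an' (A.erase an))
    (N : Finset (EuclideanSpace ℝ (Fin d))) (hN : N.Nonempty)
    (hNA : N ⊆ A.erase an) (hNan' : an' ∉ N)
    (R δw : ℝ) (hR : 0 < R) (hδw : 0 < δw)
    (nn : EuclideanSpace ℝ (Fin d) → EuclideanSpace ℝ (Fin d))
    (hnn : ∀ y, IsNN N y (nn y))
    (hball : ∀ u ∈ insert an' A, ∀ v ∈ insert an' A, dist u v ≤ R)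
    (hspread : ∀ B ⊆ A, B.card = A.card - 1 →
      R ^ 2 / δw ≤ ∑ a ∈ B, dist a (nn a) ^ 2) :
    ∑ a ∈ A, dist a (nn a) ^ 2 ≤ (1 + δw) * ∑ a ∈ A', dist a (nn a) ^ 2 := by
  have hB := hspread (A.erase an) (Finset.erase_subset _ _) (Finset.card_erase_of_mem han)
  have hnnanA : nn an ∈ insert an' A :=
    Finset.mem_insert_of_mem (Finset.mem_of_mem_erase (hNA (hnn an).1))
  have hdan : dist an (nn an) ≤ R := hball an (Finset.mem_insert_of_mem han) _ hnnanA
  have hd2 : dist an (nn an) ^ 2 ≤ R ^ 2 := pow_le_pow_left₀ dist_nonneg hdan 2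
  have hsplit : ∑ a ∈ A, dist a (nn a) ^ 2
      = dist an (nn an) ^ 2 + ∑ a ∈ A.erase an, dist a (nn a) ^ 2 :=
    (Finset.add_sum_erase A _ han).symm
  have hsub : ∑ a ∈ A.erase an, dist a (nn a) ^ 2 ≤ ∑ a ∈ A', dist a (nn a) ^ 2 := by
    rw [hA']
    exact Finset.sum_le_sum_of_subset_of_nonneg (Finset.subset_insert _ _)
      (fun i _ _ => sq_nonneg _)
  have hR2 : R ^ 2 ≤ (∑ a ∈ A.erase an, dist a (nn a) ^ 2) * δw := (div_le_iff₀ hδw).mp hB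
  nlinarith [hsub, hd2, hsplit, hR2, hδw.le]
end

section
/- For integers m ≥ 64 and k with 2 ≤ k ≤ √m, and any real d ≥ 1, the quantity h(k) := (1 + 4/(k^{2/d}(m-k-1)))^{k-1} satisfies h(k) ≤ 1 + 4/m^{1/4 + 1/(d+1)}. -/
/-!
With `x = 4 / (k ^ (2 / d) * (m - k - 1))` and `n = k - 1`, the bounds `1 + x ≤ exp x` and
`exp t ≤ 1 + 2 t` on `[0, 1]` give `(1 + x) ^ n ≤ 1 + 2 n x` as soon as `n x ≤ 1`, so it suffices to show
`k x ≤ 2 / m ^ (1/4 + 1/(d+1))`. Since `k ≤ √m`, `k ^ (1 - 2/d) ≤ m ^ (1/2 - 1/(d+1))`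
(for `d < 2` the left side is at most `1`), and `m - k - 1 ≥ 3m/4`; this reduces the claim
to `m ^ (1/4) ≥ 8/3`, which holds for `m ≥ 64`.
-/

open Real

lemma one_add_pow_le_one_add_two_mul {x : ℝ} {n : ℕ} (hx : 0 ≤ x) (hnx : n * x ≤ 1) :
    (1 + x) ^ n ≤ 1 + 2 * (n * x) := by
  have hnx₀ : 0 ≤ n * x := by positivity
  calc (1 + x) ^ n ≤ exp x ^ n := by gcongr; linarith [add_one_le_exp x]
    _ = exp (n * x) := (exp_nat_mul x n).symm
    _ ≤ 1 + 2 * (n * x) := by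
      have := abs_exp_sub_one_le (x := n * x) (by rwa [abs_of_nonneg hnx₀])
      rw [abs_of_nonneg hnx₀] at this
      linarith [le_abs_self (exp (n * x) - 1)]

lemma rpow_one_sub_two_div_le {k m d : ℝ} (hk : 1 ≤ k) (hkm : k ≤ √m) (hd : 1 ≤ d) :
    k ^ (1 - 2 / d) ≤ m ^ (1 / 2 - 1 / (d + 1)) := by
  have hm : 1 ≤ m := one_le_sqrt.mp (hk.trans hkm)
  have hd' : 1 / (d + 1) ≤ 1 / 2 := by gcongr; linarith
  rcases le_or_gt 0 (1 - 2 / d) with he | he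
  · calc k ^ (1 - 2 / d) ≤ (√m) ^ (1 - 2 / d) := by gcongr
      _ = m ^ (1 / 2 - 1 / d) := by
        rw [sqrt_eq_rpow, ← rpow_mul (by linarith)]; ring_nf
      _ ≤ m ^ (1 / 2 - 1 / (d + 1)) := by
        gcongr; linarith
  · calc k ^ (1 - 2 / d) ≤ 1 := rpow_le_one_of_one_le_of_nonpos hk he.le
      _ ≤ m ^ (1 / 2 - 1 / (d + 1)) := one_le_rpow hm (by linarith)

lemma three_quarters_mul_le_sub_sub_one {k m : ℝ} (hm : 64 ≤ m) (hkm : k ≤ √m) :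
    3 / 4 * m ≤ m - k - 1 := by
  have : √m ≤ m / 8 := (sqrt_le_left (by linarith)).mpr (by nlinarith)
  linarith

lemma eight_thirds_le_rpow_quarter {m : ℝ} (hm : 64 ≤ m) : 8 / 3 ≤ m ^ (1 / 4 : ℝ) := by
  rw [show (1 / 4 : ℝ) = (4 : ℝ)⁻¹ by norm_num, le_rpow_inv_iff_of_pos (by norm_num)
    (by linarith) (by norm_num)]
  norm_num; linarith

lemma mul_four_div_le_two_div_rpow {k m d : ℝ} (hm : 64 ≤ m) (hk : 1 ≤ k) (hkm : k ≤ √m) (hd : 1 ≤ d) :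
    k * (4 / (k ^ (2 / d) * (m - k - 1))) ≤ 2 / m ^ (1 / 4 + 1 / (d + 1)) := by
  have hm₀ : 0 < m := by linarith
  set a := m ^ (1 / 4 : ℝ)
  set b := m ^ (1 / (d + 1))
  have ha : 8 / 3 ≤ a := eight_thirds_le_rpow_quarter hm
  have hb : 0 < b := by positivity
  have hm_eq : m = a ^ 4 := by rw [← rpow_natCast, ← rpow_mul hm₀.le]; norm_num
  have hsqrt_eq : m ^ (1 / 2 : ℝ) = a ^ 2 := by
    rw [← rpow_natCast, ← rpow_mul hm₀.le]; norm_num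
  have hden : 3 / 4 * m ≤ m - k - 1 := three_quarters_mul_le_sub_sub_one hm hkm
  calc k * (4 / (k ^ (2 / d) * (m - k - 1))) = 4 * k ^ (1 - 2 / d) / (m - k - 1) := by
        rw [rpow_sub (by linarith), rpow_one]; field_simp
    _ ≤ 4 * m ^ (1 / 2 - 1 / (d + 1)) / (3 / 4 * m) := by
        gcongr
        exact rpow_one_sub_two_div_le hk hkm hd
    _ = 4 * (a ^ 2 / b) / (3 / 4 * a ^ 4) := by rw [rpow_sub hm₀, hsqrt_eq, ← hm_eq]
    _ = 16 / (3 * a ^ 2 * b) := by field_simp; ring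
    _ ≤ 2 / (a * b) := by
        have hab : 0 < a * b := by positivity
        rw [div_le_div_iff₀ (by positivity) hab]; nlinarith
    _ = 2 / m ^ (1 / 4 + 1 / (d + 1)) := by rw [rpow_add hm₀]

theorem stmt_15 (m k : ℕ) (hm : 64 ≤ m) (hk : 2 ≤ k)
    (hkm : (k : ℝ) ≤ Real.sqrt m) (d : ℝ) (hd : 1 ≤ d) :
    (1 + 4 / ((k : ℝ) ^ (2 / d) * ((m : ℝ) - k - 1))) ^ (k - 1)
      ≤ 1 + 4 / (m : ℝ) ^ ((1 : ℝ) / 4 + 1 / (d + 1)) := by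
  have hm' : (64 : ℝ) ≤ m := by exact_mod_cast hm
  have hk' : (1 : ℝ) ≤ k := by exact_mod_cast (by omega : 1 ≤ k)
  set x := 4 / ((k : ℝ) ^ (2 / d) * ((m : ℝ) - k - 1))
  set α : ℝ := 1 / 4 + 1 / (d + 1)
  have hx : 0 ≤ x := div_nonneg (by norm_num) (mul_nonneg (by positivity)
    (by linarith [three_quarters_mul_le_sub_sub_one hm' hkm]))
  have hkx : ((k - 1 : ℕ) : ℝ) * x ≤ 2 / (m : ℝ) ^ α :=
    calc ((k - 1 : ℕ) : ℝ) * x ≤ k * x := by gcongr; omega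
      _ ≤ 2 / (m : ℝ) ^ α := mul_four_div_le_two_div_rpow hm' hk' hkm hd
  have hα : 1 / 4 ≤ α := le_add_of_nonneg_right (by positivity)
  have hmα : 2 ≤ (m : ℝ) ^ α :=
    calc (2 : ℝ) ≤ (m : ℝ) ^ (1 / 4 : ℝ) := by linarith [eight_thirds_le_rpow_quarter hm']
      _ ≤ (m : ℝ) ^ α := rpow_le_rpow_of_exponent_le (by linarith) hα
  calc (1 + x) ^ (k - 1) ≤ 1 + 2 * ((k - 1 : ℕ) * x) :=
        one_add_pow_le_one_add_two_mul hx (hkx.trans ((div_le_one (by linarith)).mpr hmα))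
    _ ≤ 1 + 2 * (2 / (m : ℝ) ^ α) := by gcongr
    _ = 1 + 4 / (m : ℝ) ^ α := by ring
end
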